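/- arXiv:2602.19983 — 2 statements merged into one kernel-verified Lean document; each statement's English description precedes it below -/
import Mathlib

section
/- Let m : [0, D] → (0, 1) be strictly decreasing and measurable, let p₀ be a probability density on [0, D], and c, ℓ > 0. Define E(k) = (∫₀^D [c/(r+ℓ)] (1−m(r))^k p₀(r) dr) / (∫₀^D (1−m(r))^k p₀(r) dr) for real k ≥ 0. Then E is monotonically nonincreasing in k. -/
open MeasureTheory

lemma int_helper {s : Set ℝ} (hs : MeasurableSet s) {p q : ℝ → ℝ}
    (hp : IntegrableOn p s) (hpm : Measurable p) (hq : Measurable q)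
    {C : ℝ} (hb : ∀ r ∈ s, |q r| ≤ C) (hp0 : ∀ r, 0 ≤ p r) :
    IntegrableOn (fun r => q r * p r) s := by
  refine (hp.const_mul C).mono' ((hq.mul hpm).aestronglyMeasurable) ?_
  filter_upwards [ae_restrict_mem hs] with r hr
  rw [Real.norm_eq_abs, abs_mul, abs_of_nonneg (hp0 r)]
  exact mul_le_mul_of_nonneg_right (hb r hr) (hp0 r)

lemma chebyshev_key {s : Set ℝ} (hs : MeasurableSet s) {f h w : ℝ → ℝ}
    (hw0 : ∀ r ∈ s, 0 ≤ w r)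
    (hiw : IntegrableOn w s) (hifw : IntegrableOn (fun r => f r * w r) s)
    (hihw : IntegrableOn (fun r => h r * w r) s)
    (hifhw : IntegrableOn (fun r => f r * h r * w r) s)
    (hanti : ∀ x ∈ s, ∀ y ∈ s, (f x - f y) * (h x - h y) ≤ 0) :
    (∫ r in s, f r * h r * w r) * (∫ r in s, w r) ≤
      (∫ r in s, f r * w r) * (∫ r in s, h r * w r) := by
  set I0 := ∫ r in s, w r with hI0
  set If := ∫ r in s, f r * w r with hIf
  set Ih := ∫ r in s, h r * w r with hIh
  set I1 := ∫ r in s, f r * h r * w r with hI1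
  have key : ∀ x ∈ s, f x * h x * I0 - f x * Ih - h x * If + I1 ≤ 0 := by
    intro x hx
    have heq : f x * h x * I0 - f x * Ih - h x * If + I1
        = ∫ y in s, (f x - f y) * (h x - h y) * w y := by
      rw [show (fun y => (f x - f y) * (h x - h y) * w y)
          = fun y => ((f x * h x) * w y - f x * (h y * w y) - h x * (f y * w y))
              + f y * h y * w y by funext y; ring]
      have ia : Integrable (fun y => (f x * h x) * w y) (volume.restrict s) :=
        hiw.const_mul _
      have ib : Integrable (fun y => f x * (h y * w y)) (volume.restrict s) :=
        hihw.const_mul _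
      have ic : Integrable (fun y => h x * (f y * w y)) (volume.restrict s) :=
        hifw.const_mul _
      have iab : Integrable (fun y => (f x * h x) * w y - f x * (h y * w y))
          (volume.restrict s) := by exact ia.sub ib
      have iabc : Integrable
          (fun y => (f x * h x) * w y - f x * (h y * w y) - h x * (f y * w y))
          (volume.restrict s) := by exact iab.sub ic
      rw [integral_add iabc hifhw, integral_sub iab ic, integral_sub ia ib]
      simp only [integral_const_mul]
      try rw [← hI0]
      try rw [← hIf]
      try rw [← hIh]
      try rw [← hI1]
      try ring
    rw [heq]
    refine integral_nonpos_of_ae ?_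
    filter_upwards [ae_restrict_mem hs] with y hy
    exact mul_nonpos_of_nonpos_of_nonneg (hanti x hx y hy) (hw0 y hy)
  have hS : ∫ x in s, (f x * h x * I0 - f x * Ih - h x * If + I1) * w x ≤ 0 := by
    refine integral_nonpos_of_ae ?_
    filter_upwards [ae_restrict_mem hs] with x hx
    exact mul_nonpos_of_nonpos_of_nonneg (key x hx) (hw0 x hx)
  have hSeq : ∫ x in s, (f x * h x * I0 - f x * Ih - h x * If + I1) * w x
      = 2 * (I1 * I0 - If * Ih) := by
    rw [show (fun x => (f x * h x * I0 - f x * Ih - h x * If + I1) * w x)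
        = fun x => ((f x * h x * w x * I0 - (f x * w x) * Ih - (h x * w x) * If)
            + w x * I1) by funext x; ring]
    have ja : Integrable (fun x => f x * h x * w x * I0) (volume.restrict s) :=
      hifhw.mul_const _
    have jb : Integrable (fun x => (f x * w x) * Ih) (volume.restrict s) :=
      hifw.mul_const _
    have jc : Integrable (fun x => (h x * w x) * If) (volume.restrict s) :=
      hihw.mul_const _
    have jd : Integrable (fun x => w x * I1) (volume.restrict s) :=
      hiw.mul_const _
    have jab : Integrable (fun x => f x * h x * w x * I0 - (f x * w x) * Ih)
        (volume.restrict s) := by exact ja.sub jb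
    have jabc : Integrable
        (fun x => f x * h x * w x * I0 - (f x * w x) * Ih - (h x * w x) * If)
        (volume.restrict s) := by exact jab.sub jc
    rw [integral_add jabc jd, integral_sub jab jc, integral_sub ja jb]
    simp only [integral_mul_const]
    try rw [← hI0]
    try rw [← hIf]
    try rw [← hIh]
    try rw [← hI1]
    try ring
  rw [hSeq] at hS
  nlinarith [hS]

theorem stmt_5 (D : ℝ) (hD : 0 < D) (m p₀ : ℝ → ℝ) (c ℓ : ℝ)
    (hc : 0 < c) (hℓ : 0 < ℓ)
    (hm : Measurable m) (hmanti : StrictAntiOn m (Set.Icc 0 D))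
    (hm01 : ∀ r ∈ Set.Icc 0 D, m r ∈ Set.Ioo (0 : ℝ) 1)
    (hp₀ : Measurable p₀) (hp₀0 : ∀ r, 0 ≤ p₀ r)
    (hp₀1 : ∫ r in Set.Icc 0 D, p₀ r = 1) :
    AntitoneOn
      (fun k : ℝ =>
        (∫ r in Set.Icc 0 D, (c / (r + ℓ)) * (1 - m r) ^ k * p₀ r) /
          (∫ r in Set.Icc 0 D, (1 - m r) ^ k * p₀ r))
      (Set.Ici 0) := by
  set s : Set ℝ := Set.Icc 0 D with hsdef
  have hs : MeasurableSet s := measurableSet_Icc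
  have h0s : (0 : ℝ) ∈ s := ⟨le_refl 0, hD.le⟩
  set ε : ℝ := 1 - m 0 with hεdef
  have hε : 0 < ε := by
    have := (hm01 0 h0s).2; simp only [hεdef]; linarith
  -- basic facts about g r = 1 - m r on s
  have hganti : ∀ r ∈ s, ε ≤ 1 - m r := by
    intro r hr
    have : m r ≤ m 0 := hmanti.antitoneOn h0s hr hr.1
    simp only [hεdef]; linarith
  have hgpos : ∀ r ∈ s, 0 < 1 - m r := fun r hr => lt_of_lt_of_le hε (hganti r hr)
  have hgle1 : ∀ r ∈ s, 1 - m r ≤ 1 := by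
    intro r hr; have := (hm01 r hr).1; linarith
  have hgmono : ∀ x ∈ s, ∀ y ∈ s, x ≤ y → 1 - m x ≤ 1 - m y := by
    intro x hx y hy hxy
    have : m y ≤ m x := hmanti.antitoneOn hx hy hxy
    linarith
  -- f bounds
  have hfpos : ∀ r ∈ s, 0 < c / (r + ℓ) := by
    intro r hr; exact div_pos hc (by linarith [hr.1])
  have hfle : ∀ r ∈ s, c / (r + ℓ) ≤ c / ℓ := by
    intro r hr
    apply div_le_div_of_nonneg_left hc.le hℓ
    linarith [hr.1]
  have hfanti : ∀ x ∈ s, ∀ y ∈ s, x ≤ y → c / (y + ℓ) ≤ c / (x + ℓ) := by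
    intro x hx y hy hxy
    apply div_le_div_of_nonneg_left hc.le (by linarith [hx.1])
    linarith
  -- integrability of p₀
  have hp₀int : IntegrableOn p₀ s := by
    by_contra hcon
    rw [integral_undef hcon] at hp₀1
    norm_num at hp₀1
  -- measurability of pieces
  have hfm : Measurable fun r : ℝ => c / (r + ℓ) :=
    measurable_const.div (measurable_id.add_const ℓ)
  have hgm : ∀ a : ℝ, Measurable fun r : ℝ => (1 - m r) ^ a :=
    fun a => by fun_prop
  -- rpow bounds
  have hga_le1 : ∀ a : ℝ, 0 ≤ a → ∀ r ∈ s, (1 - m r) ^ a ≤ 1 := by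
    intro a ha r hr
    exact Real.rpow_le_one (hgpos r hr).le (hgle1 r hr) ha
  have hga_pos : ∀ a : ℝ, ∀ r ∈ s, 0 < (1 - m r) ^ a := by
    intro a r hr; exact Real.rpow_pos_of_pos (hgpos r hr) a
  -- generic integrability
  have hint_g : ∀ a : ℝ, 0 ≤ a → IntegrableOn (fun r => (1 - m r) ^ a * p₀ r) s := by
    intro a ha
    refine int_helper hs hp₀int hp₀ (hgm a) (C := 1) ?_ hp₀0
    intro r hr
    rw [abs_of_nonneg (hga_pos a r hr).le]
    exact hga_le1 a ha r hr
  have hint_fg : ∀ a : ℝ, 0 ≤ a →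
      IntegrableOn (fun r => (c / (r + ℓ)) * (1 - m r) ^ a * p₀ r) s := by
    intro a ha
    refine int_helper hs hp₀int hp₀ (hfm.mul (hgm a)) (C := c / ℓ) ?_ hp₀0
    intro r hr
    rw [abs_of_nonneg (mul_nonneg (hfpos r hr).le (hga_pos a r hr).le)]
    calc c / (r + ℓ) * (1 - m r) ^ a ≤ (c / ℓ) * 1 :=
          mul_le_mul (hfle r hr) (hga_le1 a ha r hr) (hga_pos a r hr).le
            (by positivity)
      _ = c / ℓ := mul_one _
  -- positivity of the denominator
  have hDen : ∀ a : ℝ, 0 ≤ a → 0 < ∫ r in s, (1 - m r) ^ a * p₀ r := by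
    intro a ha
    have h1 : ∫ r in s, ε ^ a * p₀ r ≤ ∫ r in s, (1 - m r) ^ a * p₀ r := by
      refine setIntegral_mono_on (hp₀int.const_mul _) (hint_g a ha) hs ?_
      intro r hr
      exact mul_le_mul_of_nonneg_right
        (Real.rpow_le_rpow hε.le (hganti r hr) ha) (hp₀0 r)
    have h2 : ∫ r in s, ε ^ a * p₀ r = ε ^ a := by
      rw [integral_const_mul, hp₀1, mul_one]
    have h3 : (0 : ℝ) < ε ^ a := Real.rpow_pos_of_pos hε a
    linarith
  -- main antitone proof
  intro k₁ hk₁ k₂ hk₂ h12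
  simp only [Set.mem_Ici] at hk₁ hk₂
  set δ : ℝ := k₂ - k₁ with hδdef
  have hδ : 0 ≤ δ := by simp only [hδdef]; linarith
  set f : ℝ → ℝ := fun r => c / (r + ℓ) with hfdef
  set h : ℝ → ℝ := fun r => (1 - m r) ^ δ with hhdef
  set w : ℝ → ℝ := fun r => (1 - m r) ^ k₁ * p₀ r with hwdef
  have hw0 : ∀ r ∈ s, 0 ≤ w r := fun r hr =>
    mul_nonneg (hga_pos k₁ r hr).le (hp₀0 r)
  -- rewrite k₂-integrals in terms of h and w
  have hsplit : ∀ r ∈ s, (1 - m r) ^ k₂ = (1 - m r) ^ δ * (1 - m r) ^ k₁ := by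
    intro r hr
    rw [← Real.rpow_add (hgpos r hr)]
    congr 1
    simp only [hδdef]; ring
  have hDen2 : ∫ r in s, (1 - m r) ^ k₂ * p₀ r = ∫ r in s, h r * w r := by
    refine setIntegral_congr_fun hs ?_
    intro r hr
    simp only [hhdef, hwdef]
    rw [hsplit r hr]; ring
  have hNum2 : ∫ r in s, (c / (r + ℓ)) * (1 - m r) ^ k₂ * p₀ r
      = ∫ r in s, f r * h r * w r := by
    refine setIntegral_congr_fun hs ?_
    intro r hr
    simp only [hhdef, hwdef, hfdef]
    rw [hsplit r hr]; ring
  -- integrability of the four functions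
  have hiw : IntegrableOn w s := hint_g k₁ hk₁
  have hifw : IntegrableOn (fun r => f r * w r) s := by
    have := hint_fg k₁ hk₁
    simpa [hfdef, hwdef, mul_assoc] using this
  have hihw : IntegrableOn (fun r => h r * w r) s := by
    have := hint_g k₂ hk₂
    rw [show (fun r => h r * w r) = fun r => ((1 - m r) ^ δ * (1 - m r) ^ k₁) * p₀ r by
      funext r; simp only [hhdef, hwdef]; ring]
    refine int_helper hs hp₀int hp₀ ((hgm δ).mul (hgm k₁)) (C := 1) ?_ hp₀0
    intro r hr
    rw [abs_of_nonneg (mul_nonneg (hga_pos δ r hr).le (hga_pos k₁ r hr).le)]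
    calc (1 - m r) ^ δ * (1 - m r) ^ k₁ ≤ 1 * 1 :=
          mul_le_mul (hga_le1 δ hδ r hr) (hga_le1 k₁ hk₁ r hr) (hga_pos k₁ r hr).le
            zero_le_one
      _ = 1 := mul_one 1
  have hifhw : IntegrableOn (fun r => f r * h r * w r) s := by
    rw [show (fun r => f r * h r * w r)
        = fun r => (f r * ((1 - m r) ^ δ * (1 - m r) ^ k₁)) * p₀ r by
      funext r; simp only [hhdef, hwdef, hfdef]; ring]
    refine int_helper hs hp₀int hp₀ (hfm.mul ((hgm δ).mul (hgm k₁))) (C := c / ℓ) ?_ hp₀0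
    intro r hr
    have hprod : 0 ≤ (1 - m r) ^ δ * (1 - m r) ^ k₁ :=
      mul_nonneg (hga_pos δ r hr).le (hga_pos k₁ r hr).le
    rw [abs_of_nonneg (mul_nonneg (hfpos r hr).le hprod)]
    calc c / (r + ℓ) * ((1 - m r) ^ δ * (1 - m r) ^ k₁) ≤ (c / ℓ) * 1 := by
          refine mul_le_mul (hfle r hr) ?_ hprod (by positivity)
          calc (1 - m r) ^ δ * (1 - m r) ^ k₁ ≤ 1 * 1 :=
                mul_le_mul (hga_le1 δ hδ r hr) (hga_le1 k₁ hk₁ r hr)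
                  (hga_pos k₁ r hr).le zero_le_one
            _ = 1 := mul_one 1
      _ = c / ℓ := mul_one _
  -- antivariation
  have hanti : ∀ x ∈ s, ∀ y ∈ s, (f x - f y) * (h x - h y) ≤ 0 := by
    intro x hx y hy
    rcases le_total x y with hxy | hxy
    · have h1 : f y ≤ f x := hfanti x hx y hy hxy
      have h2 : h x ≤ h y := Real.rpow_le_rpow (hgpos x hx).le (hgmono x hx y hy hxy) hδ
      exact mul_nonpos_of_nonneg_of_nonpos (by linarith) (by linarith)
    · have h1 : f x ≤ f y := hfanti y hy x hx hxy
      have h2 : h y ≤ h x := Real.rpow_le_rpow (hgpos y hy).le (hgmono y hy x hx hxy) hδ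
      exact mul_nonpos_of_nonpos_of_nonneg (by linarith) (by linarith)
  have key := chebyshev_key hs hw0 hiw hifw hihw hifhw hanti
  -- conclude
  simp only []
  rw [hNum2, hDen2]
  have hD₁ : 0 < ∫ r in s, w r := hDen k₁ hk₁
  have hD₂ : 0 < ∫ r in s, h r * w r := by
    have := hDen k₂ hk₂
    rwa [hDen2] at this
  rw [div_le_div_iff₀ hD₂ hD₁]
  have : ∫ r in s, (c / (r + ℓ)) * (1 - m r) ^ k₁ * p₀ r = ∫ r in s, f r * w r := by
    refine setIntegral_congr_fun hs ?_
    intro r hr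
    simp only [hfdef, hwdef]; ring
  rw [this]
  exact key
end

section
/- Forward invariance via comparison: Let h : ℝⁿ → ℝ be continuously differentiable and x : [0, ∞) → ℝⁿ a solution of ẋ = f(x) + g(x)u(x) such that d/dt h(x(t)) ≥ −α(h(x(t))) for all t, where α : ℝ → ℝ is locally Lipschitz, strictly increasing, and α(0) = 0. If h(x(0)) ≥ 0, then h(x(t)) ≥ 0 for all t ≥ 0. -/
/-!
Along the trajectory put `H t = h (x t)`. Wherever `H t < 0` the barrier inequality gives
`H' t ≥ -α (H t) > 0`, so `H` is strictly increasing on any interval where it stays negative.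
Hence, after the last time `t₀ ≤ t` with `H t₀ ≥ 0`, the function `H` increases, and `H t < 0`
would force `H t₀ < H t < 0`.
-/

open Set

lemma nonneg_of_deriv_pos_of_neg {H : ℝ → ℝ} {a b : ℝ} (hab : a ≤ b)
    (hcont : ContinuousOn H (Icc a b)) (hderiv : ∀ t ∈ Ioo a b, H t < 0 → 0 < deriv H t)
    (ha : 0 ≤ H a) : 0 ≤ H b := by
  by_contra! hb
  set S := Icc a b ∩ H ⁻¹' Ici 0
  have hS : IsCompact S :=
    isCompact_Icc.of_isClosed_subset
      (hcont.preimage_isClosed_of_isClosed isClosed_Icc isClosed_Ici) inter_subset_left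
  obtain ⟨t₀, ⟨⟨ht₀a, ht₀b⟩, ht₀H⟩, ht₀max⟩ :=
    hS.exists_isGreatest ⟨a, ⟨left_mem_Icc.mpr hab, ha⟩⟩
  have ht₀b : t₀ < b := ht₀b.lt_of_ne (by rintro rfl; exact hb.not_ge ht₀H)
  have hneg : ∀ t ∈ Ioo t₀ b, H t < 0 := fun t ht ↦ by
    by_contra! hHt
    exact ht.1.not_ge (ht₀max ⟨⟨ht₀a.trans ht.1.le, ht.2.le⟩, hHt⟩)
  have hmono : StrictMonoOn H (Icc t₀ b) := by
    refine strictMonoOn_of_deriv_pos (convex_Icc t₀ b)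
      (hcont.mono (Icc_subset_Icc_left ht₀a)) fun t ht ↦ ?_
    rw [interior_Icc] at ht
    exact hderiv t ⟨ht₀a.trans_lt ht.1, ht.2⟩ (hneg t ht)
  have := hmono (left_mem_Icc.mpr ht₀b.le) (right_mem_Icc.mpr ht₀b.le) ht₀b
  exact hb.not_ge (ht₀H.trans this.le)

lemma nonneg_of_neg_le_hasDerivAt {H H' α : ℝ → ℝ} (hα : ∀ s < 0, α s < 0)
    (hH : ∀ t, 0 ≤ t → HasDerivAt H (H' t) t) (hbarrier : ∀ t, 0 ≤ t → -α (H t) ≤ H' t)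
    (h0 : 0 ≤ H 0) (t : ℝ) (ht : 0 ≤ t) : 0 ≤ H t := by
  refine nonneg_of_deriv_pos_of_neg ht
    (fun s hs ↦ (hH s hs.1).continuousAt.continuousWithinAt) (fun s hs hHs ↦ ?_) h0
  have hs : 0 ≤ s := hs.1.le
  rw [(hH s hs).deriv]
  linarith [hα _ hHs, hbarrier s hs]

theorem stmt_11_general {n m : ℕ}
    (h : EuclideanSpace ℝ (Fin n) → ℝ) (hh : ContDiff ℝ 1 h)
    (f : EuclideanSpace ℝ (Fin n) → EuclideanSpace ℝ (Fin n))
    (g : EuclideanSpace ℝ (Fin n) → EuclideanSpace ℝ (Fin m) →L[ℝ] EuclideanSpace ℝ (Fin n))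
    (u : EuclideanSpace ℝ (Fin n) → EuclideanSpace ℝ (Fin m))
    (x : ℝ → EuclideanSpace ℝ (Fin n))
    (hdyn : ∀ t, HasDerivAt x (f (x t) + g (x t) (u (x t))) t)
    (α : ℝ → ℝ) (hαmono : StrictMono α) (hα0 : α 0 = 0)
    (hcbf : ∀ t : ℝ, 0 ≤ t →
      -α (h (x t)) ≤ fderiv ℝ h (x t) (f (x t) + g (x t) (u (x t))))
    (hinit : 0 ≤ h (x 0)) :
    ∀ t : ℝ, 0 ≤ t → 0 ≤ h (x t) := by
  have hα : ∀ s < 0, α s < 0 := fun s hs ↦ hα0 ▸ hαmono hs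
  have hH : ∀ t, 0 ≤ t →
      HasDerivAt (h ∘ x) (fderiv ℝ h (x t) (f (x t) + g (x t) (u (x t)))) t := fun t _ ↦
    ((hh.differentiable one_ne_zero (x t)).hasFDerivAt).comp_hasDerivAt t (hdyn t)
  exact nonneg_of_neg_le_hasDerivAt hα hH hcbf hinit

theorem stmt_11 {n m : ℕ}
    (h : EuclideanSpace ℝ (Fin n) → ℝ) (hh : ContDiff ℝ 1 h)
    (f : EuclideanSpace ℝ (Fin n) → EuclideanSpace ℝ (Fin n))
    (g : EuclideanSpace ℝ (Fin n) → EuclideanSpace ℝ (Fin m) →L[ℝ] EuclideanSpace ℝ (Fin n))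
    (u : EuclideanSpace ℝ (Fin n) → EuclideanSpace ℝ (Fin m))
    (x : ℝ → EuclideanSpace ℝ (Fin n))
    (hdyn : ∀ t, HasDerivAt x (f (x t) + g (x t) (u (x t))) t)
    (α : ℝ → ℝ) (hαlip : LocallyLipschitz α) (hαmono : StrictMono α) (hα0 : α 0 = 0)
    (hcbf : ∀ t : ℝ, 0 ≤ t →
      -α (h (x t)) ≤ fderiv ℝ h (x t) (f (x t) + g (x t) (u (x t))))
    (hinit : 0 ≤ h (x 0)) :
    ∀ t : ℝ, 0 ≤ t → 0 ≤ h (x t) :=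
  stmt_11_general h hh f g u x hdyn α hαmono hα0 hcbf hinit
end
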